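/- arXiv:0801.1195 — 2 statements merged into one kernel-verified Lean document; each statement's English description precedes it below -/
import Mathlib

section
/- Let x = (x_∞, x₂, x₃) ∈ F and let d ∈ {0,1} be the 0-th 2-adic digit of x₂, i.e., x₂ − d ∈ 2ℤ₂. Then the point u = ((x_∞ + d)/2, (x₂ + d)/2, (x₃ + d)/2) lies in F and (1/2)·x − u ∈ Γ; that is, u is the unique representative in F of (1/2)x modulo Γ (the explicit formula for α^{(−1,0)}, multiplication by 1/2, on X = G/Γ ≅ F). -/
/-!
Since `x₂ ≡ d (mod 2ℤ₂)`, the number `(x₂ + d)/2` is a 2-adic integer, and `2` is a unit in `ℤ₃`;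
so `u ∈ F`, and `(1/2)x - u = Δ(-d/2)` with `-d/2 = -3d/6 ∈ ℤ[1/6]`. For uniqueness, if `u, v ∈ F`
and `v - u = Δ q` with `q ∈ ℤ[1/6]`, then `q` is integral at `2` and `3` by the ultrametric
inequality, hence `q ∈ ℤ`, and `|q| < 1` in the real coordinate forces `q = 0`.
-/

open Set

noncomputable section

/-- The ambient group `G = ℝ × ℚ₂ × ℚ₃`. -/
abbrev G : Type := ℝ × ℚ_[2] × ℚ_[3]

/-- The diagonal embedding of `ℚ` into `G`. -/
def Δ (r : ℚ) : G := ((r : ℝ), (r : ℚ_[2]), (r : ℚ_[3]))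

/-- `ℤ[1/6]`, the rationals expressible with denominator `6^k`. -/
def zInv6 : Set ℚ := {q | ∃ (z : ℤ) (k : ℕ), q = z / 6 ^ k}

/-- `Γ = Δ(ℤ[1/6])`. -/
def Γ : Set G := Δ '' zInv6

/-- The fundamental domain `F = [0,1) × ℤ₂ × ℤ₃`. -/
def F : Set G := {x | x.1 ∈ Set.Ico (0 : ℝ) 1 ∧ ‖x.2.1‖ ≤ 1 ∧ ‖x.2.2‖ ≤ 1}

/-- Coordinatewise multiplication by a rational on `G`. -/
def act (q : ℚ) (x : G) : G :=
  ((q : ℝ) * x.1, (q : ℚ_[2]) * x.2.1, (q : ℚ_[3]) * x.2.2)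

lemma norm_sub_le_of_norm_le_of_norm_le {S : Type*} [SeminormedAddCommGroup S]
    [IsUltrametricDist S] {a b : S} {r : ℝ} (ha : ‖a‖ ≤ r) (hb : ‖b‖ ≤ r) : ‖a - b‖ ≤ r := by
  rw [sub_eq_add_neg]
  exact (IsUltrametricDist.norm_add_le_max a (-b)).trans (max_le ha (by rwa [norm_neg]))

lemma Padic.coprime_den_of_norm_le_one {p : ℕ} [Fact p.Prime] {q : ℚ}
    (hq : ‖(q : ℚ_[p])‖ ≤ 1) : p.Coprime q.den :=
  PadicInt.norm_natCast_eq_one_iff.mp (PadicInt.isUnit_iff.mp (PadicInt.isUnit_den q hq))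

lemma norm_two_padic_three : ‖(2 : ℚ_[3])‖ = 1 := by
  exact_mod_cast (Padic.norm_natCast_eq_one_iff (p := 3) (n := 2)).mpr (by norm_num)

lemma Δ_sub (r s : ℚ) : Δ (r - s) = Δ r - Δ s := by
  simp only [Δ, Rat.cast_sub, Prod.mk_sub_mk]

lemma sub_mem_zInv6 {r s : ℚ} (hr : r ∈ zInv6) (hs : s ∈ zInv6) : r - s ∈ zInv6 := by
  obtain ⟨a, k, rfl⟩ := hr
  obtain ⟨b, l, rfl⟩ := hs
  refine ⟨a * 6 ^ l - b * 6 ^ k, k + l, ?_⟩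
  field_simp
  push_cast
  ring

lemma sub_mem_Γ {a b : G} (ha : a ∈ Γ) (hb : b ∈ Γ) : a - b ∈ Γ := by
  obtain ⟨r, hr, rfl⟩ := ha
  obtain ⟨s, hs, rfl⟩ := hb
  exact ⟨r - s, sub_mem_zInv6 hr hs, Δ_sub r s⟩

lemma den_eq_one_of_mem_zInv6 {q : ℚ} (hq : q ∈ zInv6) (h2 : ‖(q : ℚ_[2])‖ ≤ 1)
    (h3 : ‖(q : ℚ_[3])‖ ≤ 1) : q.den = 1 := by
  obtain ⟨z, k, hzk⟩ := hq
  have hden : q.den ∣ 6 ^ k := by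
    have := Rat.den_dvd z (6 ^ k)
    rw [Rat.divInt_eq_div] at this
    push_cast at this
    exact_mod_cast hzk ▸ this
  have hcop : Nat.Coprime 6 q.den :=
    Nat.Coprime.mul_left (Padic.coprime_den_of_norm_le_one h2) (Padic.coprime_den_of_norm_le_one h3)
  exact (hcop.symm.pow_right k).eq_one_of_dvd hden

lemma eq_of_mem_F_of_sub_mem_Γ {u v : G} (hu : u ∈ F) (hv : v ∈ F) (huv : v - u ∈ Γ) :
    v = u := by
  obtain ⟨⟨hu0, hu1⟩, hu2, hu3⟩ := hu
  obtain ⟨⟨hv0, hv1⟩, hv2, hv3⟩ := hv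
  obtain ⟨q, hq, hΔ⟩ := huv
  have hq1 : (q : ℝ) = v.1 - u.1 := congrArg (·.1) hΔ
  have hq2 : (q : ℚ_[2]) = v.2.1 - u.2.1 := congrArg (·.2.1) hΔ
  have hq3 : (q : ℚ_[3]) = v.2.2 - u.2.2 := congrArg (·.2.2) hΔ
  have hden : q.den = 1 := den_eq_one_of_mem_zInv6 hq
    (hq2 ▸ norm_sub_le_of_norm_le_of_norm_le hv2 hu2)
    (hq3 ▸ norm_sub_le_of_norm_le_of_norm_le hv3 hu3)
  obtain ⟨n, rfl⟩ : ∃ n : ℤ, q = n := ⟨q.num, (Rat.coe_int_num_of_den_eq_one hden).symm⟩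
  have hn : n = 0 := by
    have : |(n : ℝ)| < 1 := by
      push_cast at hq1
      rw [abs_lt]
      constructor <;> linarith
    exact Int.abs_lt_one_iff.mp (by exact_mod_cast this)
  rw [← sub_eq_zero, ← hΔ, hn]
  simp [Δ]

def halfRep (x : G) (d : ℤ) : G :=
  ((x.1 + (d : ℝ)) / 2, (x.2.1 + (d : ℚ_[2])) / 2, (x.2.2 + (d : ℚ_[3])) / 2)

lemma act_half_sub_halfRep (x : G) (d : ℤ) : act (1/2) x - halfRep x d = Δ (-d / 2) := by
  simp only [act, halfRep, Δ, Prod.mk_sub_mk]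
  refine Prod.ext ?_ (Prod.ext ?_ ?_) <;> push_cast <;> ring

lemma act_half_sub_halfRep_mem_Γ (x : G) (d : ℤ) : act (1/2) x - halfRep x d ∈ Γ :=
  act_half_sub_halfRep x d ▸ ⟨-d / 2, ⟨-3 * d, 1, by push_cast; ring⟩, rfl⟩

lemma halfRep_mem_F {x : G} (hx : x ∈ F) {d : ℤ} (hd : d = 0 ∨ d = 1)
    (hdig : ∃ z : ℚ_[2], ‖z‖ ≤ 1 ∧ x.2.1 - (d : ℚ_[2]) = 2 * z) : halfRep x d ∈ F := by
  obtain ⟨⟨hx0, hx1⟩, -, hx3⟩ := hx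
  obtain ⟨z, hz, hxz⟩ := hdig
  have hd01 : (0 : ℝ) ≤ d ∧ (d : ℝ) ≤ 1 := by rcases hd with rfl | rfl <;> norm_num
  have hx2d : (x.2.1 + (d : ℚ_[2])) / 2 = z + d := by
    linear_combination (1 / 2 : ℚ_[2]) * hxz
  refine ⟨⟨by simp only [halfRep]; linarith, by simp only [halfRep]; linarith⟩, ?_, ?_⟩
  · rw [halfRep, hx2d]
    exact (IsUltrametricDist.norm_add_le_max _ _).trans (max_le hz (Padic.norm_int_le_one d))
  · rw [halfRep, norm_div, norm_two_padic_three, div_one]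
    exact (IsUltrametricDist.norm_add_le_max _ _).trans (max_le hx3 (Padic.norm_int_le_one d))

/-- The explicit formula for `α^{(-1,0)}` (multiplication by `1/2`) on `X = G/Γ ≅ F`:
if `d ∈ {0,1}` is the `0`-th `2`-adic digit of `x₂` (i.e. `x₂ - d ∈ 2ℤ₂`), then
`u = ((x_∞+d)/2, (x₂+d)/2, (x₃+d)/2)` lies in `F` and is the unique representative
of `(1/2)x` modulo `Γ`. -/
theorem times_half_formula (x : G) (hx : x ∈ F) (d : ℤ) (hd : d = 0 ∨ d = 1)
    (hdig : ∃ z : ℚ_[2], ‖z‖ ≤ 1 ∧ x.2.1 - (d : ℚ_[2]) = 2 * z) :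
    ∀ u : G,
      u = ((x.1 + (d : ℝ)) / 2, (x.2.1 + (d : ℚ_[2])) / 2,
           (x.2.2 + (d : ℚ_[3])) / 2) →
      u ∈ F ∧ act (1/2) x - u ∈ Γ ∧ ∀ v ∈ F, act (1/2) x - v ∈ Γ → v = u := by
  rintro u (rfl : u = halfRep x d)
  have huF := halfRep_mem_F hx hd hdig
  have huΓ := act_half_sub_halfRep_mem_Γ x d
  refine ⟨huF, huΓ, fun v hv hvΓ => eq_of_mem_F_of_sub_mem_Γ huF hv ?_⟩
  simpa using sub_mem_Γ huΓ hvΓ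
end
end

section
/- Let a, b ≥ 1 be integers, N = 2^a·3^b, n ≥ 1. For every choice of indices i_j ∈ {0, …, N−1}, −n ≤ j ≤ n, the atom {x ∈ F : rep(N^m·x) ∈ A_{i_{−m}} for all 0 ≤ m ≤ n, and rep(N^{−m}·x) ∈ A_{i_m} for all 1 ≤ m ≤ n} is nonempty. (In particular the partition {A_0, …, A_{N−1}} satisfies the Markov nonemptiness condition for multiplication by N on G/Γ.) -/
open Set

noncomputable section

/-- The atom `A_k = [k/N, (k+1)/N) × ℤ₂ × ℤ₃` of the partition `ξ`. -/
def A (N k : ℕ) : Set G :=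
  {x | x.1 ∈ Set.Ico ((k : ℝ) / N) (((k : ℝ) + 1) / N) ∧ ‖x.2.1‖ ≤ 1 ∧ ‖x.2.2‖ ≤ 1}

/-! Let `s = ∑_{j=-n}^{n} i_j N^{j-1}`, the terminating base-`N` expansion with digits
`i_n ⋯ i_1 . i_0 i_{-1} ⋯ i_{-n}`, and take `x = rep (s, 0, 0)`. Since `N^e ∈ ℤ[1/6]`,
multiplying by `N^e` maps `Γ` into itself, so `rep (N^e x) = rep (N^e s, 0, 0)`, and the real
coordinate of `rep (t, 0, 0)` is `fract t`. The first digit of `fract (N^e s)` is `i_{-e}`,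
which is exactly the condition `rep (N^e x) ∈ A_{i_{-e}}`. -/

theorem Nat.ofDigits_lt_pow_length {b : ℕ} {L : List ℕ} (hL : ∀ d ∈ L, d < b) :
    Nat.ofDigits b L < b ^ L.length := by
  induction L with
  | nil => simp [Nat.ofDigits]
  | cons d L ih =>
    rw [Nat.ofDigits_cons, List.length_cons, pow_succ']
    have hd : d < b := hL d List.mem_cons_self
    have := Nat.mul_le_mul_left b (ih fun x hx => hL x (List.mem_cons_of_mem d hx))
    rw [Nat.mul_succ] at this
    omega

theorem Nat.fract_ofDigits_div_pow_mem_Ico {K : Type*} [Field K] [LinearOrder K]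
    [IsStrictOrderedRing K] [FloorRing K] {N : ℕ} {L : List ℕ} (hL : ∀ d ∈ L, d < N) {l : ℕ}
    (hl : l < L.length) :
    Int.fract (((Nat.ofDigits N L : ℕ) : K) / N ^ (l + 1)) ∈
      Ico ((L[l] : K) / N) ((L[l] + 1) / N) := by
  set low := Nat.ofDigits N (L.take l)
  set high := Nat.ofDigits N (L.drop (l + 1))
  have hsplit : Nat.ofDigits N L = low + N ^ l * (L[l] + N * high) := by
    conv_lhs => rw [← List.take_append_drop l L, List.drop_eq_getElem_cons hl]
    rw [Nat.ofDigits_append, Nat.ofDigits_cons, List.length_take_of_le hl.le]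
  have hdigit : L[l] < N := hL _ (List.getElem_mem hl)
  have hlow : low < N ^ l := by
    simpa [List.length_take_of_le hl.le] using
      Nat.ofDigits_lt_pow_length (L := L.take l) fun d hd => hL d (List.mem_of_mem_take hd)
  have hN : (0 : K) < N := by exact_mod_cast (Nat.zero_le _).trans_lt hdigit
  have hlow' : (low : K) / N ^ l < 1 := by
    rw [div_lt_one (by positivity)]; exact_mod_cast hlow
  have hdigit' : (L[l] : K) + 1 ≤ N := by exact_mod_cast hdigit
  have hfract : Int.fract (((Nat.ofDigits N L : ℕ) : K) / N ^ (l + 1)) =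
      (L[l] + low / N ^ l) / N := by
    rw [Int.fract_eq_iff]
    refine ⟨by positivity, ?_, high, ?_⟩
    · rw [div_lt_one hN]; linarith
    · rw [hsplit]; push_cast; field_simp; ring
  rw [hfract]
  constructor
  · gcongr; exact le_add_of_nonneg_right (by positivity)
  · gcongr

theorem zpow_mem_of_inv_mem {K : Type*} [DivisionRing K] {S : Subring K} {x : K} (hx : x ∈ S)
    (hx' : x⁻¹ ∈ S) (e : ℤ) : x ^ e ∈ S := by
  obtain ⟨k, rfl | rfl⟩ := Int.eq_nat_or_neg e
  · simpa using S.pow_mem hx k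
  · simpa using S.pow_mem hx' k

def zInv6Subring : Subring ℚ where
  carrier := zInv6
  zero_mem' := ⟨0, 0, by simp⟩
  one_mem' := ⟨1, 0, by simp⟩
  add_mem' := by
    rintro _ _ ⟨z, k, rfl⟩ ⟨w, l, rfl⟩
    exact ⟨z * 6 ^ l + w * 6 ^ k, k + l, by push_cast; field_simp; ring⟩
  mul_mem' := by
    rintro _ _ ⟨z, k, rfl⟩ ⟨w, l, rfl⟩
    exact ⟨z * w, k + l, by push_cast; field_simp; ring⟩
  neg_mem' := by
    rintro _ ⟨z, k, rfl⟩
    exact ⟨-z, k, by push_cast; ring⟩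

theorem two_pow_mul_three_pow_zpow_mem_zInv6 (a b : ℕ) (e : ℤ) :
    ((2 ^ a * 3 ^ b : ℕ) : ℚ) ^ e ∈ zInv6 := by
  refine zpow_mem_of_inv_mem (S := zInv6Subring) ⟨2 ^ a * 3 ^ b, 0, by simp⟩
    ⟨2 ^ b * 3 ^ a, a + b, ?_⟩ e
  push_cast
  field_simp
  rw [show (6 : ℚ) = 2 * 3 by norm_num, mul_pow, pow_add, pow_add]
  ring

theorem exists_intCast_eq_of_mem_zInv6 {q : ℚ} (hq : q ∈ zInv6) (h2 : ‖(q : ℚ_[2])‖ ≤ 1)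
    (h3 : ‖(q : ℚ_[3])‖ ≤ 1) : ∃ z : ℤ, q = z := by
  have not_dvd_den {p : ℕ} [Fact p.Prime] (h : ‖(q : ℚ_[p])‖ ≤ 1) : ¬p ∣ q.den := by
    rwa [Padic.norm_rat_le_one_iff_padicValuation_le_one, Rat.padicValuation_le_one_iff] at h
  have hcop : Nat.Coprime q.den (2 * 3) := Nat.Coprime.mul_right
    ((Nat.prime_two.coprime_iff_not_dvd.mpr (not_dvd_den h2)).symm)
    ((Nat.prime_three.coprime_iff_not_dvd.mpr (not_dvd_den h3)).symm)
  obtain ⟨z, k, rfl⟩ := hq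
  have hden : ((z : ℚ) / 6 ^ k).den ∣ 6 ^ k := by
    have := Rat.den_dvd z (6 ^ k)
    rw [← Rat.intCast_div_eq_divInt] at this
    exact_mod_cast this
  exact ⟨_, (Rat.coe_int_num_of_den_eq_one ((hcop.pow_right k).eq_one_of_dvd hden)).symm⟩

def ΔHom : ℚ →+* G := (Rat.castHom ℝ).prod ((Rat.castHom ℚ_[2]).prod (Rat.castHom ℚ_[3]))

def ΓSubring : Subring G := zInv6Subring.map ΔHom

theorem mem_ΓSubring {x : G} : x ∈ ΓSubring ↔ x ∈ Γ := Iff.rfl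

theorem act_eq_Δ_mul (q : ℚ) (x : G) : act q x = Δ q * x := rfl

theorem act_mk_zero_zero (q : ℚ) (t : ℝ) : act q (t, 0, 0) = (q * t, 0, 0) := by
  simp [act]

theorem eq_of_mem_F_of_sub_mem_Γ_s16 {f g : G} (hf : f ∈ F) (hg : g ∈ F) (h : f - g ∈ Γ) :
    f = g := by
  obtain ⟨q, hq, hfg⟩ := h
  have padic_le_one {p : ℕ} [Fact p.Prime] {u v : ℚ_[p]} (hu : ‖u‖ ≤ 1) (hv : ‖v‖ ≤ 1) :
      ‖u - v‖ ≤ 1 := by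
    simpa [dist_eq_norm] using (dist_triangle_max u 0 v).trans (by simpa using max_le hu hv)
  have h1 : (q : ℝ) = f.1 - g.1 := congrArg (·.1) hfg
  have h2 : (q : ℚ_[2]) = f.2.1 - g.2.1 := congrArg (·.2.1) hfg
  have h3 : (q : ℚ_[3]) = f.2.2 - g.2.2 := congrArg (·.2.2) hfg
  obtain ⟨z, rfl⟩ := exists_intCast_eq_of_mem_zInv6 hq
    (h2 ▸ padic_le_one hf.2.1 hg.2.1) (h3 ▸ padic_le_one hf.2.2 hg.2.2)
  have hz : |((z : ℚ) : ℝ)| < 1 := h1 ▸ abs_sub_lt_of_nonneg_of_lt hf.1.1 hf.1.2 hg.1.1 hg.1.2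
  obtain rfl : z = 0 := Int.abs_lt_one_iff.mp (by exact_mod_cast hz)
  rw [← sub_eq_zero, ← hfg]
  exact map_zero ΔHom

section Representatives

variable {rep : G → G}

theorem rep_eq_of_sub_mem (hrep : ∀ x : G, rep x ∈ F ∧ x - rep x ∈ Γ) {y f : G} (hf : f ∈ F)
    (h : y - f ∈ Γ) : rep y = f :=
  eq_of_mem_F_of_sub_mem_Γ_s16 (hrep y).1 hf <| mem_ΓSubring.mp <| by
    simpa using ΓSubring.sub_mem (mem_ΓSubring.mpr h) (mem_ΓSubring.mpr (hrep y).2)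

theorem rep_act_rep (hrep : ∀ x : G, rep x ∈ F ∧ x - rep x ∈ Γ) {q : ℚ} (hq : q ∈ zInv6)
    (y : G) : rep (act q (rep y)) = rep (act q y) := by
  refine (rep_eq_of_sub_mem hrep (hrep _).1 ?_).symm
  have hΔ : Δ q ∈ ΓSubring := ⟨q, hq, rfl⟩
  have := ΓSubring.add_mem (ΓSubring.mul_mem hΔ (mem_ΓSubring.mpr (hrep y).2))
    (mem_ΓSubring.mpr (hrep (act q (rep y))).2)
  exact mem_ΓSubring.mp <| by simpa [act_eq_Δ_mul, mul_sub] using this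

theorem rep_mk_zero_zero (hrep : ∀ x : G, rep x ∈ F ∧ x - rep x ∈ Γ) (t : ℝ) :
    rep (t, 0, 0) = (Int.fract t, ((-⌊t⌋ : ℤ) : ℚ_[2]), ((-⌊t⌋ : ℤ) : ℚ_[3])) := by
  refine rep_eq_of_sub_mem hrep
    ⟨⟨Int.fract_nonneg t, Int.fract_lt_one t⟩, Padic.norm_int_le_one _, Padic.norm_int_le_one _⟩
    ⟨⌊t⌋, ⟨⌊t⌋, 0, by simp⟩, ?_⟩
  simp [Δ, Int.self_sub_fract]

theorem rep_act_rep_mk_zero_zero_mem_A (hrep : ∀ x : G, rep x ∈ F ∧ x - rep x ∈ Γ) {q : ℚ}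
    (hq : q ∈ zInv6) {t : ℝ} {N k : ℕ} (h : Int.fract (q * t) ∈ Ico ((k : ℝ) / N) ((k + 1) / N)) :
    rep (act q (rep (t, 0, 0))) ∈ A N k := by
  rw [rep_act_rep hrep hq, act_mk_zero_zero, rep_mk_zero_zero hrep]
  exact ⟨h, Padic.norm_int_le_one _, Padic.norm_int_le_one _⟩

end Representatives

theorem refined_atom_nonempty_general (rep : G → G) (hrep : ∀ x : G, rep x ∈ F ∧ x - rep x ∈ Γ)
    (a b : ℕ) (N : ℕ) (hN : N = 2 ^ a * 3 ^ b)
    (n : ℕ) (i : ℤ → ℕ) (hi : ∀ j : ℤ, -(n : ℤ) ≤ j → j ≤ n → i j < N) :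
    {x : G | x ∈ F ∧
        (∀ m : ℕ, m ≤ n → rep (act ((N : ℚ) ^ (m : ℤ)) x) ∈ A N (i (-(m : ℤ)))) ∧
        (∀ m : ℕ, 1 ≤ m → m ≤ n →
          rep (act ((N : ℚ) ^ (-(m : ℤ))) x) ∈ A N (i (m : ℤ)))}.Nonempty := by
  -- `L[l] = i (l - n)`: the base-`N` digits of `s`, least significant first.
  set L : List ℕ := List.ofFn fun k : Fin (2 * n + 1) => i (k - n)
  have hL : ∀ d ∈ L, d < N := by
    simp only [L, List.forall_mem_ofFn_iff]
    exact fun k => hi _ (by omega) (by omega)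
  have hN0 : (N : ℝ) ≠ 0 := by rw [hN]; positivity
  set s : ℝ := (Nat.ofDigits N L : ℕ) / N ^ (n + 1)
  have hmem : ∀ e : ℤ, -n ≤ e → e ≤ n →
      rep (act ((N : ℚ) ^ e) (rep (s, 0, 0))) ∈ A N (i (-e)) := by
    intro e he₁ he₂
    obtain ⟨l, hl, rfl⟩ : ∃ l : ℕ, l < 2 * n + 1 ∧ e = n - l :=
      ⟨(n - e).toNat, by omega, by omega⟩
    have hscale : (Rat.cast ((N : ℚ) ^ ((n : ℤ) - l)) : ℝ) * s =
        (Nat.ofDigits N L : ℕ) / N ^ (l + 1) := by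
      simp only [s, Rat.cast_zpow, Rat.cast_natCast]
      rw [zpow_sub₀ hN0, zpow_natCast, zpow_natCast]
      field_simp
      ring
    have hdigit : L[l]'(by rwa [List.length_ofFn]) = i (-((n : ℤ) - l)) := by
      rw [List.getElem_ofFn, neg_sub]
    refine rep_act_rep_mk_zero_zero_mem_A hrep
      (hN ▸ two_pow_mul_three_pow_zpow_mem_zInv6 a b _) ?_
    rw [hscale, ← hdigit]
    exact Nat.fract_ofDigits_div_pow_mem_Ico hL _
  refine ⟨rep (s, 0, 0), (hrep _).1, fun m hm => hmem m (by omega) (by omega),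
    fun m _ hm => ?_⟩
  simpa using hmem (-m) (by omega) (by omega)

/-- Every atom of the refined partition `⋁_{j=-n}^n α^j(ξ)` is nonempty: the Markov
nonemptiness condition for the partition `{A_0, …, A_{N-1}}` under multiplication
by `N` on `G/Γ`. -/
theorem refined_atom_nonempty (rep : G → G) (hrep : ∀ x : G, rep x ∈ F ∧ x - rep x ∈ Γ)
    (a b : ℕ) (ha : 1 ≤ a) (hb : 1 ≤ b) (N : ℕ) (hN : N = 2 ^ a * 3 ^ b)
    (n : ℕ) (hn : 1 ≤ n) (i : ℤ → ℕ) (hi : ∀ j : ℤ, -(n : ℤ) ≤ j → j ≤ n → i j < N) :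
    {x : G | x ∈ F ∧
        (∀ m : ℕ, m ≤ n → rep (act ((N : ℚ) ^ (m : ℤ)) x) ∈ A N (i (-(m : ℤ)))) ∧
        (∀ m : ℕ, 1 ≤ m → m ≤ n →
          rep (act ((N : ℚ) ^ (-(m : ℤ))) x) ∈ A N (i (m : ℤ)))}.Nonempty :=
  refined_atom_nonempty_general rep hrep a b N hN n i hi
end
end
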